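/- Absorption time of the Moran process for r > 1: There is a constant C > 0 such that for every n ≥ 2 and every r > 1 the following holds. Let (Y_t)_{t∈ℕ} be the Moran chain with fitness parameter r on n individuals started at Y_0 = n − 1, and let T = inf{t ∈ ℕ : Y_t ∈ {0, n}} be its absorption time. Then E[T] ≤ C · (r/(r − 1)) · n · ln n. -/

import Mathlib

/-!
Drift method. Let `d(n) = 0`, `r d(k) = p(k)⁻¹ + d(k + 1)` and `g(k) = d(1) + ⋯ + d(k)`. From
an interior state `k` the expected value of `g` after one step is exactly `g(k) - 1`, so
`E g(Y_{t+1}) + P(Y_t ∉ {0, n}) ≤ E g(Y_t)`; summing over `t` gives `E T ≤ g(n - 1)`. Summing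
the recursion gives `(r - 1) g(n - 1) ≤ ∑ p(k)⁻¹ = (1 + r) n H_{n-1}`, and `H_{n-1} ≤ 1 + log n`.
-/

set_option autoImplicit false

open MeasureTheory ProbabilityTheory

/-- The first-hitting time of the time-dependent predicate `P` (valued in `ℝ≥0∞`,
so that it is `∞` when `P` is never satisfied). -/
noncomputable def hitTime {Ω : Type*} (P : ℕ → Ω → Prop) (ω : Ω) : ENNReal :=
  sInf {t : ENNReal | ∃ n : ℕ, t = n ∧ P n ω}

/-- The one-step up-probability of the Moran process with fitness parameter `r` on `n`
individuals, at `k` non-mutants: `p(k) = (k/(k + r(n−k))) · ((n−k)/n)`. -/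
noncomputable def moranP (n : ℕ) (r : ℝ) (k : ℕ) : ℝ :=
  ((k : ℝ) / ((k : ℝ) + r * ((n : ℝ) - (k : ℝ)))) * (((n : ℝ) - (k : ℝ)) / (n : ℝ))

/-- `Y` is (a copy of) the Moran chain with fitness parameter `r` on `n` individuals:
`Y t` is the number of non-mutants at time `t`; conditional on any positive-probability
history, from an interior state `k` the chain moves up with probability `p(k)`, down with
probability `r·p(k)` and stays otherwise, while `0` and `n` are absorbing. -/
def IsMoranChain {Ω : Type} [MeasurableSpace Ω] (μ : Measure Ω)
    (n : ℕ) (r : ℝ) (Y : ℕ → Ω → ℕ) : Prop :=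
  (∀ t, Measurable (Y t)) ∧ (∀ t ω, Y t ω ≤ n) ∧
  ∀ t : ℕ, ∀ h : ℕ → ℕ, μ {ω | ∀ i ≤ t, Y i ω = h i} ≠ 0 →
    ((0 < h t → h t < n →
      (ProbabilityTheory.cond μ {ω | ∀ i ≤ t, Y i ω = h i}) {ω | Y (t + 1) ω = h t + 1}
          = ENNReal.ofReal (moranP n r (h t)) ∧
      (ProbabilityTheory.cond μ {ω | ∀ i ≤ t, Y i ω = h i}) {ω | Y (t + 1) ω = h t - 1}
          = ENNReal.ofReal (r * moranP n r (h t)) ∧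
      (ProbabilityTheory.cond μ {ω | ∀ i ≤ t, Y i ω = h i}) {ω | Y (t + 1) ω = h t}
          = ENNReal.ofReal (1 - (1 + r) * moranP n r (h t))) ∧
    ((h t = 0 ∨ h t = n) →
      (ProbabilityTheory.cond μ {ω | ∀ i ≤ t, Y i ω = h i}) {ω | Y (t + 1) ω = h t} = 1))

open scoped ENNReal

section Potential

variable {n : ℕ} {r : ℝ} {k : ℕ}

lemma moranP_nonneg (hr : 0 ≤ r) (hk : k ≤ n) : 0 ≤ moranP n r k := by
  have hnk : (0 : ℝ) ≤ n - k := sub_nonneg.2 (by exact_mod_cast hk)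
  unfold moranP
  positivity

lemma moranP_pos (hr : 0 < r) (hk₀ : 0 < k) (hkn : k < n) : 0 < moranP n r k := by
  have hk : (0 : ℝ) < k := by exact_mod_cast hk₀
  have hnk : (0 : ℝ) < n - k := sub_pos.2 (by exact_mod_cast hkn)
  have hn : (0 : ℝ) < n := by linarith
  unfold moranP
  positivity

/-- Equivalent to `0 ≤ k² + r (n - k)²` after clearing denominators. -/
lemma one_add_mul_moranP_le_one (hr : 0 ≤ r) (hk₀ : 0 < k) (hkn : k < n) :
    (1 + r) * moranP n r k ≤ 1 := by
  have hk : (0 : ℝ) < k := by exact_mod_cast hk₀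
  have hnk : (0 : ℝ) < n - k := sub_pos.2 (by exact_mod_cast hkn)
  have hn : (0 : ℝ) < n := by linarith
  have hden : (0 : ℝ) < k + r * (n - k) := by positivity
  unfold moranP
  rw [div_mul_div_comm, mul_div_assoc', div_le_one (by positivity)]
  nlinarith [sq_nonneg ((n : ℝ) - k), mul_nonneg hr (sq_nonneg ((n : ℝ) - k))]

lemma inv_moranP (hr : 0 < r) (hk₀ : 0 < k) (hkn : k < n) :
    (moranP n r k)⁻¹ = n / (n - k) + r * n / k := by
  have hk : (0 : ℝ) < k := by exact_mod_cast hk₀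
  have hnk : (0 : ℝ) < n - k := sub_pos.2 (by exact_mod_cast hkn)
  have hn : (0 : ℝ) < n := by linarith
  have hden : (0 : ℝ) < k + r * (n - k) := by positivity
  unfold moranP
  field_simp

noncomputable def moranIncrement (n : ℕ) (r : ℝ) (k : ℕ) : ℝ :=
  ∑ j ∈ Finset.Ico k n, (moranP n r j)⁻¹ / r ^ (j + 1 - k)

noncomputable def moranPotential (n : ℕ) (r : ℝ) (k : ℕ) : ℝ :=
  ∑ m ∈ Finset.range k, moranIncrement n r (m + 1)

lemma moranIncrement_nonneg (hr : 0 ≤ r) : 0 ≤ moranIncrement n r k :=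
  Finset.sum_nonneg fun j hj =>
    div_nonneg (inv_nonneg.2 (moranP_nonneg hr (Finset.mem_Ico.1 hj).2.le)) (by positivity)

lemma moranIncrement_self : moranIncrement n r n = 0 := by
  simp [moranIncrement]

lemma mul_moranIncrement (hr : r ≠ 0) (hkn : k < n) :
    r * moranIncrement n r k = (moranP n r k)⁻¹ + moranIncrement n r (k + 1) := by
  have hshift : ∀ j ∈ Finset.Ico (k + 1) n,
      (moranP n r j)⁻¹ / r ^ (j + 1 - k) = (moranP n r j)⁻¹ / r ^ (j + 1 - (k + 1)) / r := by
    intro j hj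
    rw [show j + 1 - k = j + 1 - (k + 1) + 1 by have := (Finset.mem_Ico.1 hj).1; omega,
      pow_succ, div_div]
  rw [moranIncrement, Finset.sum_eq_sum_Ico_succ_bot hkn, Finset.sum_congr rfl hshift,
    ← Finset.sum_div, Nat.add_sub_cancel_left, pow_one, mul_add, mul_div_cancel₀ _ hr,
    mul_div_cancel₀ _ hr, moranIncrement]

lemma moranPotential_nonneg (hr : 0 ≤ r) : 0 ≤ moranPotential n r k :=
  Finset.sum_nonneg fun _ _ => moranIncrement_nonneg hr

lemma moranPotential_succ :
    moranPotential n r (k + 1) = moranPotential n r k + moranIncrement n r (k + 1) :=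
  Finset.sum_range_succ _ _

lemma moranPotential_drift (hr : 0 < r) (hk₀ : 0 < k) (hkn : k < n) :
    moranP n r k * moranPotential n r (k + 1) + r * moranP n r k * moranPotential n r (k - 1)
      + (1 - (1 + r) * moranP n r k) * moranPotential n r k + 1 = moranPotential n r k := by
  obtain ⟨k, rfl⟩ : ∃ k', k = k' + 1 := ⟨k - 1, by omega⟩
  have hrec := mul_moranIncrement (n := n) hr.ne' hkn
  have hp : moranP n r (k + 1) * (moranP n r (k + 1))⁻¹ = 1 :=
    mul_inv_cancel₀ (moranP_pos hr hk₀ hkn).ne'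
  rw [Nat.add_sub_cancel, moranPotential_succ (k := k + 1), moranPotential_succ (k := k)]
  linear_combination -moranP n r (k + 1) * hrec - hp

lemma sub_one_mul_moranPotential_le (hr : 0 < r) (hn : 0 < n) :
    (r - 1) * moranPotential n r (n - 1)
      ≤ ∑ m ∈ Finset.range (n - 1), (moranP n r (m + 1))⁻¹ := by
  obtain ⟨N, rfl⟩ : ∃ N, n = N + 1 := ⟨n - 1, by omega⟩
  have hrec : r * moranPotential (N + 1) r N
      = ∑ m ∈ Finset.range N, (moranP (N + 1) r (m + 1))⁻¹
        + ∑ m ∈ Finset.range N, moranIncrement (N + 1) r (m + 1 + 1) := by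
    rw [moranPotential, Finset.mul_sum, ← Finset.sum_add_distrib]
    exact Finset.sum_congr rfl fun m hm =>
      mul_moranIncrement hr.ne' (by simp only [Finset.mem_range] at hm; omega)
  have hshift : ∑ m ∈ Finset.range N, moranIncrement (N + 1) r (m + 1 + 1)
      + moranIncrement (N + 1) r 1 = moranPotential (N + 1) r N := by
    rw [moranPotential, ← Finset.sum_range_succ' (fun m => moranIncrement (N + 1) r (m + 1)),
      Finset.sum_range_succ, moranIncrement_self, add_zero]
  have hd : 0 ≤ moranIncrement (N + 1) r 1 := moranIncrement_nonneg hr.le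
  rw [Nat.add_sub_cancel]
  linarith

lemma sum_inv_moranP (hr : 0 < r) :
    ∑ m ∈ Finset.range (n - 1), (moranP n r (m + 1))⁻¹ = (1 + r) * n * harmonic (n - 1) := by
  rcases Nat.eq_zero_or_pos n with rfl | hn
  · simp
  obtain ⟨N, rfl⟩ : ∃ N, n = N + 1 := ⟨n - 1, by omega⟩
  have hH : (harmonic N : ℝ) = ∑ m ∈ Finset.range N, ((m : ℝ) + 1)⁻¹ := by
    simp [harmonic]
  have hrefl : ∑ m ∈ Finset.range N, ((N : ℝ) + 1) / ((N : ℝ) + 1 - (m + 1 : ℕ))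
      = ∑ m ∈ Finset.range N, ((N : ℝ) + 1) / ((m : ℝ) + 1) := by
    rw [← Finset.sum_range_reflect]
    refine Finset.sum_congr rfl fun m hm => ?_
    have hm : m < N := Finset.mem_range.1 hm
    rw [show N - 1 - m + 1 = N - m by omega, Nat.cast_sub hm.le]
    ring_nf
  rw [Nat.add_sub_cancel, Finset.sum_congr rfl fun m hm =>
      inv_moranP hr m.succ_pos (by simp only [Finset.mem_range] at hm; omega),
    Finset.sum_add_distrib]
  push_cast at hrefl ⊢
  rw [hrefl, hH, Finset.mul_sum, ← Finset.sum_add_distrib]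
  refine Finset.sum_congr rfl fun m _ => ?_
  field_simp

lemma moranPotential_le (hr : 1 < r) (hn : 2 ≤ n) :
    moranPotential n r (n - 1) ≤ 10 * (r / (r - 1)) * n * Real.log n := by
  have hr₁ : 0 < r - 1 := sub_pos.2 hr
  have hn₀ : (0 : ℝ) < n := by positivity
  have hH : (harmonic (n - 1) : ℝ) ≤ 1 + Real.log n :=
    (harmonic_le_one_add_log _).trans <| add_le_add_right (Real.log_le_log
      (Nat.cast_pos.2 (by omega)) (Nat.cast_le.2 (Nat.sub_le n 1))) 1
  have hlog : 1 / 4 ≤ Real.log n := by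
    have := Real.log_two_gt_d9
    have := Real.log_le_log two_pos (show (2 : ℝ) ≤ n by exact_mod_cast hn)
    linarith
  have hQ := sub_one_mul_moranPotential_le (zero_lt_one.trans hr) (by omega : 0 < n)
  rw [sum_inv_moranP (zero_lt_one.trans hr)] at hQ
  rw [mul_comm, ← le_div_iff₀ hr₁] at hQ
  refine hQ.trans ?_
  rw [div_le_iff₀ hr₁, show 10 * (r / (r - 1)) * n * Real.log n * (r - 1)
    = 10 * r * n * Real.log n by field_simp]
  calc (1 + r) * n * harmonic (n - 1) ≤ (1 + r) * n * (1 + Real.log n) := by gcongr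
    _ ≤ (2 * r) * n * (5 * Real.log n) := by gcongr <;> linarith
    _ = 10 * r * n * Real.log n := by ring

end Potential

section Probability

variable {Ω : Type*}

lemma hitTime_le_tsum_indicator (P : ℕ → Ω → Prop) (ω : Ω) :
    hitTime P ω ≤ ∑' t, {ω' | ∀ i ≤ t, ¬ P i ω'}.indicator 1 ω := by
  classical
  by_cases hP : ∃ m, P m ω
  · have hbefore : ∀ t < Nat.find hP, ω ∈ {ω' | ∀ i ≤ t, ¬ P i ω'} :=
      fun t ht i hi => Nat.find_min hP (hi.trans_lt ht)
    calc hitTime P ω ≤ Nat.find hP := sInf_le ⟨_, rfl, Nat.find_spec hP⟩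
      _ = ∑ t ∈ Finset.range (Nat.find hP), {ω' | ∀ i ≤ t, ¬ P i ω'}.indicator 1 ω := by
        rw [Finset.sum_congr rfl fun t ht =>
          Set.indicator_of_mem (hbefore t (Finset.mem_range.1 ht)) _]
        simp
      _ ≤ _ := ENNReal.sum_le_tsum _
  · have hall : ∀ t, {ω' | ∀ i ≤ t, ¬ P i ω'}.indicator (1 : Ω → ℝ≥0∞) ω = 1 :=
      fun t => Set.indicator_of_mem (s := {ω' | ∀ i ≤ t, ¬ P i ω'})
        (fun i _ hi => hP ⟨i, hi⟩) _
    simp [hall]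

variable [MeasurableSpace Ω]

lemma lintegral_hitTime_le_tsum (μ : Measure Ω) {P : ℕ → Ω → Prop}
    (hP : ∀ t, MeasurableSet {ω | P t ω}) :
    ∫⁻ ω, hitTime P ω ∂μ ≤ ∑' t, μ {ω | ∀ i ≤ t, ¬ P i ω} := by
  have hm : ∀ t, MeasurableSet {ω | ∀ i ≤ t, ¬ P i ω} := fun t => by
    simp_rw [Set.ofPred_forall]
    exact .iInter fun i => .iInter fun _ => (hP i).compl
  calc ∫⁻ ω, hitTime P ω ∂μ
      ≤ ∫⁻ ω, ∑' t, {ω' | ∀ i ≤ t, ¬ P i ω'}.indicator 1 ω ∂μ :=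
        lintegral_mono (hitTime_le_tsum_indicator P)
    _ = ∑' t, μ {ω | ∀ i ≤ t, ¬ P i ω} := by
        rw [lintegral_tsum fun t => (measurable_one.indicator (hm t)).aemeasurable]
        simp_rw [lintegral_indicator_one (hm _)]

lemma ENNReal.tsum_le_of_add_le {a b : ℕ → ℝ≥0∞} (h : ∀ t, a t + b (t + 1) ≤ b t) :
    ∑' t, a t ≤ b 0 := by
  have hpartial : ∀ T, ∑ t ∈ Finset.range T, a t + b T ≤ b 0 := by
    intro T
    induction T with
    | zero => simp
    | succ T ih =>
      rw [Finset.sum_range_succ, add_assoc]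
      exact (add_le_add_right (h T) _).trans ih
  rw [ENNReal.tsum_eq_iSup_nat]
  exact iSup_le fun T => le_self_add.trans (hpartial T)

lemma mul_lintegral_cond {μ : Measure Ω} {s : Set Ω} (hμs : μ s ≠ ∞) (f : Ω → ℝ≥0∞) :
    μ s * ∫⁻ ω, f ω ∂μ[|s] = ∫⁻ ω in s, f ω ∂μ := by
  rcases eq_or_ne (μ s) 0 with h | h
  · simp [h, Measure.restrict_eq_zero.2 h]
  · rw [ProbabilityTheory.cond, lintegral_smul_measure, smul_eq_mul, ← mul_assoc,
      ENNReal.mul_inv_cancel h hμs, one_mul]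

lemma lintegral_eq_tsum_mul_lintegral_cond {α : Type*} [Countable α] [MeasurableSpace α]
    [MeasurableSingletonClass α] (μ : Measure Ω) [IsFiniteMeasure μ] {X : Ω → α}
    (hX : Measurable X) (f : Ω → ℝ≥0∞) :
    ∫⁻ ω, f ω ∂μ = ∑' x, μ (X ⁻¹' {x}) * ∫⁻ ω, f ω ∂μ[|X ⁻¹' {x}] := by
  simp_rw [mul_lintegral_cond (measure_ne_top _ _)]
  rw [← lintegral_iUnion (fun x => hX (measurableSet_singleton x))
    fun x y hxy => (Set.disjoint_singleton.2 hxy).preimage X, ← Set.preimage_iUnion,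
    Set.iUnion_of_singleton, Set.preimage_univ, Measure.restrict_univ]

lemma lintegral_comp_eq_sum_of_sum_eq_one {ν : Measure Ω} [IsProbabilityMeasure ν]
    {Z : Ω → ℕ} (hZ : Measurable Z) {S : Finset ℕ} (hS : ∑ j ∈ S, ν {ω | Z ω = j} = 1)
    (G : ℕ → ℝ≥0∞) :
    ∫⁻ ω, G (Z ω) ∂ν = ∑ j ∈ S, G j * ν {ω | Z ω = j} := by
  have hmap : ∀ j, ν.map Z {j} = ν {ω | Z ω = j} :=
    fun j => Measure.map_apply hZ (measurableSet_singleton j)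
  have : IsProbabilityMeasure (ν.map Z) := Measure.isProbabilityMeasure_map hZ.aemeasurable
  have hmem : ∀ᵐ j ∂ν.map Z, j ∈ (S : Set ℕ) := by
    rw [ae_iff, ← Set.compl_def, prob_compl_eq_zero_iff S.measurableSet,
      ← sum_measure_singleton]
    simpa [hmap] using hS
  rw [← lintegral_map Measurable.of_discrete hZ, ← Measure.restrict_eq_self_of_ae_mem hmem,
    lintegral_finset]
  simp_rw [hmap]

end Probability

section MoranChain

noncomputable def moranNextMean (n : ℕ) (r : ℝ) (G : ℕ → ℝ≥0∞) (k : ℕ) : ℝ≥0∞ :=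
  ENNReal.ofReal (moranP n r k) * G (k + 1) + ENNReal.ofReal (r * moranP n r k) * G (k - 1)
    + ENNReal.ofReal (1 - (1 + r) * moranP n r k) * G k

lemma moranNextMean_moranPotential_add_one {n : ℕ} {r : ℝ} {k : ℕ} (hr : 0 < r) (hk₀ : 0 < k)
    (hkn : k < n) :
    moranNextMean n r (fun j => ENNReal.ofReal (moranPotential n r j)) k + 1
      = ENNReal.ofReal (moranPotential n r k) := by
  have hp := (moranP_pos hr hk₀ hkn).le
  have hstay := sub_nonneg.2 (one_add_mul_moranP_le_one hr.le hk₀ hkn)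
  have hg : ∀ j, 0 ≤ moranPotential n r j := fun j => moranPotential_nonneg hr.le
  have := hg (k + 1)
  have := hg (k - 1)
  have := hg k
  rw [moranNextMean, ← ENNReal.ofReal_mul hp, ← ENNReal.ofReal_mul (by positivity),
    ← ENNReal.ofReal_mul hstay, ← ENNReal.ofReal_one, ← ENNReal.ofReal_add (by positivity)
    (by positivity), ← ENNReal.ofReal_add (by positivity) (by positivity),
    ← ENNReal.ofReal_add (by positivity) zero_le_one, moranPotential_drift hr hk₀ hkn]

variable {Ω : Type} [MeasurableSpace Ω] {μ : Measure Ω} {n : ℕ} {r : ℝ} {Y : ℕ → Ω → ℕ}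

namespace IsMoranChain

lemma measurableSet_history (hY : IsMoranChain μ n r Y) (t : ℕ) (h : ℕ → ℕ) :
    MeasurableSet {ω | ∀ i ≤ t, Y i ω = h i} := by
  simp_rw [Set.ofPred_forall]
  exact .iInter fun i => .iInter fun _ => hY.1 i (measurableSet_singleton _)

variable [IsFiniteMeasure μ] {t : ℕ} {h : ℕ → ℕ}

lemma lintegral_cond_succ_of_interior (hY : IsMoranChain μ n r Y) (hr : 0 ≤ r)
    (hE : μ {ω | ∀ i ≤ t, Y i ω = h i} ≠ 0) (h₀ : 0 < h t) (hn : h t < n) (G : ℕ → ℝ≥0∞) :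
    ∫⁻ ω, G (Y (t + 1) ω) ∂μ[|{ω | ∀ i ≤ t, Y i ω = h i}] = moranNextMean n r G (h t) := by
  have := cond_isProbabilityMeasure hE
  obtain ⟨hup, hdown, hstay⟩ := (hY.2.2 t h hE).1 h₀ hn
  have hp := moranP_nonneg hr hn.le
  have hS : ∑ j ∈ {h t + 1, h t - 1, h t},
      μ[{ω | Y (t + 1) ω = j}|{ω | ∀ i ≤ t, Y i ω = h i}] = 1 := by
    rw [Finset.sum_insert (by simp; omega), Finset.sum_pair (by omega), hup, hdown, hstay,
      ← ENNReal.ofReal_add (by positivity) (sub_nonneg.2 (one_add_mul_moranP_le_one hr h₀ hn)),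
      ← ENNReal.ofReal_add hp (by nlinarith [one_add_mul_moranP_le_one hr h₀ hn]),
      ← ENNReal.ofReal_one]
    ring_nf
  rw [lintegral_comp_eq_sum_of_sum_eq_one (hY.1 _) hS, Finset.sum_insert (by simp; omega),
    Finset.sum_pair (by omega), hup, hdown, hstay, moranNextMean]
  ring

lemma lintegral_cond_succ_of_absorbed (hY : IsMoranChain μ n r Y)
    (hE : μ {ω | ∀ i ≤ t, Y i ω = h i} ≠ 0) (hb : h t = 0 ∨ h t = n) (G : ℕ → ℝ≥0∞) :
    ∫⁻ ω, G (Y (t + 1) ω) ∂μ[|{ω | ∀ i ≤ t, Y i ω = h i}] = G (h t) := by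
  have := cond_isProbabilityMeasure hE
  have hstay := (hY.2.2 t h hE).2 hb
  rw [lintegral_comp_eq_sum_of_sum_eq_one (S := {h t}) (hY.1 _) (by simpa using hstay),
    Finset.sum_singleton, hstay, mul_one]

lemma lintegral_cond_step (hY : IsMoranChain μ n r Y) (hr : 0 ≤ r) {G : ℕ → ℝ≥0∞}
    (hG : ∀ k, 0 < k → k < n → moranNextMean n r G k + 1 ≤ G k)
    (hE : μ {ω | ∀ i ≤ t, Y i ω = h i} ≠ 0) :
    ∫⁻ ω, G (Y (t + 1) ω) + (Set.Ioo 0 n).indicator 1 (Y t ω)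
        ∂μ[|{ω | ∀ i ≤ t, Y i ω = h i}]
      ≤ ∫⁻ ω, G (Y t ω) ∂μ[|{ω | ∀ i ≤ t, Y i ω = h i}] := by
  have := cond_isProbabilityMeasure hE
  have hYt : ∀ᵐ ω ∂μ[|{ω | ∀ i ≤ t, Y i ω = h i}], Y t ω = h t :=
    ae_cond_of_forall_mem (hY.measurableSet_history t h) fun ω hω => hω t le_rfl
  have hlast : ∀ F : ℕ → ℝ≥0∞, ∫⁻ ω, F (Y t ω) ∂μ[|{ω | ∀ i ≤ t, Y i ω = h i}] = F (h t) :=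
    fun F => by simp [lintegral_congr_ae (hYt.mono fun ω hω => congrArg F hω)]
  rw [lintegral_add_left (show Measurable fun ω => G (Y (t + 1) ω) from
    Measurable.of_discrete.comp (hY.1 _)), hlast, hlast]
  by_cases hint : h t ∈ Set.Ioo 0 n
  · rw [hY.lintegral_cond_succ_of_interior hr hE hint.1 hint.2, Set.indicator_of_mem hint]
    exact hG _ hint.1 hint.2
  · obtain ⟨ω, hω⟩ := nonempty_of_measure_ne_zero hE
    have hb : h t = 0 ∨ h t = n := by
      have := hω t le_rfl ▸ hY.2.1 t ω
      simp only [Set.mem_Ioo, not_and_or, not_lt] at hint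
      omega
    rw [hY.lintegral_cond_succ_of_absorbed hE hb, Set.indicator_of_notMem hint, add_zero]

lemma lintegral_step (hY : IsMoranChain μ n r Y) (hr : 0 ≤ r) {G : ℕ → ℝ≥0∞}
    (hG : ∀ k, 0 < k → k < n → moranNextMean n r G k + 1 ≤ G k) (t : ℕ) :
    ∫⁻ ω, G (Y (t + 1) ω) ∂μ + μ {ω | Y t ω ∈ Set.Ioo 0 n} ≤ ∫⁻ ω, G (Y t ω) ∂μ := by
  -- The fibres of the history are the conditioning events of `IsMoranChain`.
  let H : Ω → Fin (t + 1) → ℕ := fun ω i => Y i ω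
  have hH : Measurable H := measurable_pi_lambda _ fun i => hY.1 i
  have hfibre : ∀ ω₀, H ⁻¹' {H ω₀} = {ω | ∀ i ≤ t, Y i ω = Y i ω₀} := fun ω₀ => by
    ext ω
    simp only [Set.mem_preimage, Set.mem_singleton_iff, funext_iff, Fin.forall_iff,
      Set.mem_ofPred_eq, H]
    exact ⟨fun h i hi => h i (by omega), fun h i hi => h i (by omega)⟩
  have hinterior : μ {ω | Y t ω ∈ Set.Ioo 0 n}
      = ∫⁻ ω, (Set.Ioo 0 n).indicator 1 (Y t ω) ∂μ := by
    simp_rw [← Set.indicator_comp_right (Y t)]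
    exact (lintegral_indicator_one (hY.1 t measurableSet_Ioo)).symm
  rw [hinterior, ← lintegral_add_left (show Measurable fun ω => G (Y (t + 1) ω) from
      Measurable.of_discrete.comp (hY.1 _)), lintegral_eq_tsum_mul_lintegral_cond μ hH,
    lintegral_eq_tsum_mul_lintegral_cond μ hH]
  refine ENNReal.tsum_le_tsum fun v => ?_
  rcases eq_or_ne (μ (H ⁻¹' {v})) 0 with h0 | h0
  · simp [h0]
  obtain ⟨ω₀, rfl⟩ : ∃ ω₀, H ω₀ = v := nonempty_of_measure_ne_zero h0
  rw [hfibre] at h0 ⊢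
  exact mul_le_mul_of_nonneg_left (hY.lintegral_cond_step hr hG h0) zero_le

lemma lintegral_hitTime_absorbed_le (hY : IsMoranChain μ n r Y) (hr : 0 ≤ r) {G : ℕ → ℝ≥0∞}
    (hG : ∀ k, 0 < k → k < n → moranNextMean n r G k + 1 ≤ G k) :
    ∫⁻ ω, hitTime (fun t ω => Y t ω = 0 ∨ Y t ω = n) ω ∂μ ≤ ∫⁻ ω, G (Y 0 ω) ∂μ :=
  calc ∫⁻ ω, hitTime (fun t ω => Y t ω = 0 ∨ Y t ω = n) ω ∂μ
      ≤ ∑' t, μ {ω | ∀ i ≤ t, ¬(Y i ω = 0 ∨ Y i ω = n)} :=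
        lintegral_hitTime_le_tsum μ fun t => hY.1 t (.of_discrete (s := {k | k = 0 ∨ k = n}))
    _ ≤ ∑' t, μ {ω | Y t ω ∈ Set.Ioo 0 n} := ENNReal.tsum_le_tsum fun t => measure_mono
        fun ω hω => by
          have := hY.2.1 t ω
          have := hω t le_rfl
          simp only [Set.mem_Ioo, Set.mem_ofPred_eq] at this ⊢
          omega
    _ ≤ ∫⁻ ω, G (Y 0 ω) ∂μ := ENNReal.tsum_le_of_add_le fun t => by
        rw [add_comm]
        exact hY.lintegral_step hr hG t

end IsMoranChain

end MoranChain

/-- **Absorption time of the Moran process for `r > 1`.** -/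
theorem moran_absorption_time_r_gt_one :
    ∃ C : ℝ, 0 < C ∧
      ∀ n : ℕ, 2 ≤ n → ∀ r : ℝ, 1 < r →
      ∀ (Ω : Type) (_ : MeasurableSpace Ω) (μ : Measure Ω), IsProbabilityMeasure μ →
      ∀ Y : ℕ → Ω → ℕ, IsMoranChain μ n r Y → (∀ ω, Y 0 ω = n - 1) →
      ∫⁻ ω, hitTime (fun t ω => Y t ω = 0 ∨ Y t ω = n) ω ∂μ
        ≤ ENNReal.ofReal (C * (r / (r - 1)) * n * Real.log n) := by
  refine ⟨10, by norm_num, fun n hn r hr Ω _ μ _ Y hY hY0 => ?_⟩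
  have hr₀ : 0 < r := zero_lt_one.trans hr
  calc ∫⁻ ω, hitTime (fun t ω => Y t ω = 0 ∨ Y t ω = n) ω ∂μ
      ≤ ∫⁻ ω, ENNReal.ofReal (moranPotential n r (Y 0 ω)) ∂μ :=
        hY.lintegral_hitTime_absorbed_le hr₀.le fun k hk₀ hkn =>
          (moranNextMean_moranPotential_add_one hr₀ hk₀ hkn).le
    _ = ENNReal.ofReal (moranPotential n r (n - 1)) := by simp [hY0]
    _ ≤ ENNReal.ofReal (10 * (r / (r - 1)) * n * Real.log n) :=
        ENNReal.ofReal_le_ofReal (moranPotential_le hr hn)
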